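/- Let Λ > 0, M > 0, Q ≠ 0 and s > 0. If a is a real number with a < 0 and P'(a,s) = 0, then P''(a,s) > 0. Consequently, every local maximum of the function r ↦ P(r,s) is attained at some positive value of r. -/

import Mathlib

noncomputable section

/-- The quartic polynomial `P(r,s) = sL/3*r^4 - r^2 + 2sM*r - sQ^2` (case `Q != 0`). -/
def P (M Q Λ s r : ℝ) : ℝ := s * Λ / 3 * r ^ 4 - r ^ 2 + 2 * s * M * r - s * Q ^ 2

/-- First derivative of `P` with respect to `r`. -/
def P' (M Q Λ s r : ℝ) : ℝ := 4 * s * Λ / 3 * r ^ 3 - 2 * r + 2 * s * M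

/-- Second derivative of `P` with respect to `r`. -/
def P'' (M Q Λ s r : ℝ) : ℝ := 4 * s * Λ * r ^ 2 - 2

/-! A local maximum `a` is a critical point, `a = 0` is not one since `P'(0) = 2sM > 0`, and at a
negative critical point the identity `a P''(a) = 3 P'(a) + 4a - 6sM` forces `P''(a) > 0`.
Writing `P(x) = P(a) + P'(a)(x - a) + (x - a)² g(x)` with `g(a) = P''(a)/2` then shows that such
a point is a strict local minimum. -/

open Topology

theorem IsLocalMax.nonpos_of_forall_eq_add_sq_mul {f g : ℝ → ℝ} {a : ℝ} (hmax : IsLocalMax f a)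
    (hfg : ∀ x, f x = f a + (x - a) ^ 2 * g x) (hg : ContinuousAt g a) : g a ≤ 0 := by
  by_contra! hga
  have hpos : ∀ᶠ x in 𝓝[≠] a, 0 < g x :=
    nhdsWithin_le_nhds (hg.eventually (eventually_gt_nhds hga))
  obtain ⟨x, hxa, hgx, hfx⟩ :=
    (eventually_mem_nhdsWithin.and (hpos.and (hmax.filter_mono nhdsWithin_le_nhds))).exists
  have hsq : 0 < (x - a) ^ 2 := sq_pos_of_ne_zero (sub_ne_zero.mpr hxa)
  rw [hfg x] at hfx
  linarith [mul_pos hsq hgx]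

section

variable {M Q Λ s : ℝ}

theorem hasDerivAt_P (a : ℝ) : HasDerivAt (fun r => P M Q Λ s r) (P' M Q Λ s a) a := by
  have h := ((((hasDerivAt_pow 4 a).const_mul (s * Λ / 3)).sub (hasDerivAt_pow 2 a)).add
    ((hasDerivAt_id' a).const_mul (2 * s * M))).sub_const (s * Q ^ 2)
  refine h.congr_deriv ?_
  norm_num [P']
  ring

theorem P_eq_taylor (a x : ℝ) :
    P M Q Λ s x = P M Q Λ s a + P' M Q Λ s a * (x - a) +
      (x - a) ^ 2 * (P'' M Q Λ s a / 2 + (x - a) * (4 * s * Λ * a / 3 + s * Λ / 3 * (x - a))) := by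
  simp only [P, P', P'']
  ring

theorem P''_pos_of_P'_eq_zero (hM : 0 < M) (hs : 0 < s) {a : ℝ} (ha : a < 0)
    (hcrit : P' M Q Λ s a = 0) : 0 < P'' M Q Λ s a := by
  have hmul : a * P'' M Q Λ s a = 3 * P' M Q Λ s a + 4 * a - 6 * s * M := by
    simp only [P', P'']
    ring
  have hneg : a * P'' M Q Λ s a < 0 := by
    rw [hmul, hcrit]
    linarith [mul_pos hs hM]
  exact pos_of_mul_neg_right hneg ha.le

end

theorem local_maxima_are_positive_general (M Q Λ s : ℝ)
    (hM : 0 < M) (hs : 0 < s) :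
    (∀ a : ℝ, a < 0 → P' M Q Λ s a = 0 → 0 < P'' M Q Λ s a) ∧
    (∀ a : ℝ, IsLocalMax (fun r => P M Q Λ s r) a → 0 < a) := by
  refine ⟨fun a => P''_pos_of_P'_eq_zero hM hs, fun a hmax => ?_⟩
  have hcrit : P' M Q Λ s a = 0 := hmax.hasDerivAt_eq_zero (hasDerivAt_P a)
  have ha0 : a ≠ 0 := by
    rintro rfl
    simp only [P'] at hcrit
    linarith [mul_pos hs hM]
  by_contra! hnonpos
  have hP'' := P''_pos_of_P'_eq_zero hM hs (lt_of_le_of_ne hnonpos ha0) hcrit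
  have hg := hmax.nonpos_of_forall_eq_add_sq_mul
    (g := fun x => P'' M Q Λ s a / 2 + (x - a) * (4 * s * Λ * a / 3 + s * Λ / 3 * (x - a)))
    (fun x => by rw [P_eq_taylor a x, hcrit]; ring) (by fun_prop)
  simp only [sub_self, zero_mul, add_zero] at hg
  linarith

/-- For Λ > 0, M > 0, Q ≠ 0, s > 0: any negative critical point of `P(·,s)` has positive
second derivative, so every local maximum of `r ↦ P(r,s)` is attained at positive `r`. -/
theorem local_maxima_are_positive (M Q Λ s : ℝ)
    (hΛ : 0 < Λ) (hM : 0 < M) (hQ : Q ≠ 0) (hs : 0 < s) :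
    (∀ a : ℝ, a < 0 → P' M Q Λ s a = 0 → 0 < P'' M Q Λ s a) ∧
    (∀ a : ℝ, IsLocalMax (fun r => P M Q Λ s r) a → 0 < a) :=
  local_maxima_are_positive_general M Q Λ s hM hs
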